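/- Let D be a coassociative counital coalgebra over a field k. Then: (a) a left D-contramodule is co-Artinian if and only if its underlying left D*-module is Noetherian; (b) a right D-comodule L is Artinian if and only if the dual vector space L* is a Noetherian left D*-module; (c) a right D-comodule L is co-Noetherian provided that L* is a Noetherian left D-contramodule. -/

import Mathlib

open TensorProduct LinearMap

section Contra

variable (k : Type) [Field k]
variable (D : Type) [AddCommGroup D] [Module k D] [Coalgebra k D]

/-- Axioms for a left `D`-contramodule structure given by a contraaction map `π`. -/
structure IsContra {P : Type} [AddCommGroup P] [Module k P]
    (π : (D →ₗ[k] P) →ₗ[k] P) : Prop where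
  contraassoc : ∀ f : D ⊗[k] D →ₗ[k] P,
    π (f ∘ₗ CoalgebraStruct.comul (R := k) (A := D)) = π (π ∘ₗ TensorProduct.curry f)
  contraunit : ∀ p : P,
    π ((CoalgebraStruct.counit (R := k) (A := D)).smulRight p) = p

/-- A `k`-linear map between contramodules is a contramodule morphism. -/
def IsContraHom {P Q : Type} [AddCommGroup P] [Module k P] [AddCommGroup Q] [Module k Q]
    (πP : (D →ₗ[k] P) →ₗ[k] P) (πQ : (D →ₗ[k] Q) →ₗ[k] Q) (f : P →ₗ[k] Q) : Prop :=
  ∀ g : D →ₗ[k] P, f (πP g) = πQ (f ∘ₗ g)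

/-- The contraaction of the free left contramodule `Hom_k(D, V)`. -/
noncomputable def freeContraaction (V : Type) [AddCommGroup V] [Module k V] :
    (D →ₗ[k] (D →ₗ[k] V)) →ₗ[k] (D →ₗ[k] V) :=
  (LinearMap.lcomp k V (CoalgebraStruct.comul (R := k) (A := D))) ∘ₗ
    TensorProduct.uncurry (RingHom.id k) D D V

/-- A contramodule is finitely generated if it is a quotient of a free contramodule
with a finite-dimensional space of generators. -/
def FinGenContra {P : Type} [AddCommGroup P] [Module k P]
    (π : (D →ₗ[k] P) →ₗ[k] P) : Prop :=
  ∃ (V : Type) (_ : AddCommGroup V) (_ : Module k V), FiniteDimensional k V ∧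
    ∃ g : (D →ₗ[k] V) →ₗ[k] P, Function.Surjective g ∧
      IsContraHom k D (freeContraaction k D V) π g

end Contra

section ContraSub

variable (k : Type) [Field k]
variable (D : Type) [AddCommGroup D] [Module k D] [Coalgebra k D]
variable {P : Type} [AddCommGroup P] [Module k P]

/-- A subspace `Q ⊆ P` is a subcontramodule if the contraaction takes every map
`D → P` with values in `Q` into `Q`. -/
def IsSubcontra (π : (D →ₗ[k] P) →ₗ[k] P) (Q : Submodule k P) : Prop :=
  ∀ g : D →ₗ[k] P, LinearMap.range g ≤ Q → π g ∈ Q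

/-- A contraaction `π'` on a subspace `Q ⊆ P` is compatible with the contraaction `π`
on `P` if the inclusion `Q → P` is a morphism of contramodules.  For a subcontramodule
`Q` such a compatible contraaction exists and is unique; it is the canonical
contramodule structure of the subcontramodule. -/
def CompatibleSubContraaction (π : (D →ₗ[k] P) →ₗ[k] P) (Q : Submodule k P)
    (π' : (D →ₗ[k] ↥Q) →ₗ[k] ↥Q) : Prop :=
  ∀ g : D →ₗ[k] ↥Q, (π' g : P) = π (Q.subtype ∘ₗ g)

/-- A contramodule is Noetherian if all its subcontramodules are finitely
generated (as contramodules, with their canonical induced structure). -/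
def NoetherianContra (π : (D →ₗ[k] P) →ₗ[k] P) : Prop :=
  ∀ Q : Submodule k P, IsSubcontra k D π Q →
    ∃ π' : (D →ₗ[k] ↥Q) →ₗ[k] ↥Q,
      CompatibleSubContraaction k D π Q π' ∧ FinGenContra k D π'

/-- A contramodule is co-Artinian if every ascending chain of its subcontramodules
terminates. -/
def CoArtinianContra (π : (D →ₗ[k] P) →ₗ[k] P) : Prop :=
  ∀ f : ℕ → Submodule k P, (∀ n, IsSubcontra k D π (f n)) →
    (∀ n, f n ≤ f (n + 1)) → ∃ n, ∀ m, n ≤ m → f m = f n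

end ContraSub

open TensorProduct LinearMap

section RightComod

variable (k : Type) [Field k]
variable (D : Type) [AddCommGroup D] [Module k D] [Coalgebra k D]

/-- Axioms for a right `D`-comodule structure given by a coaction map `ρ`. -/
structure IsRightComod {N : Type} [AddCommGroup N] [Module k N]
    (ρ : N →ₗ[k] N ⊗[k] D) : Prop where
  coassoc : ∀ n : N, (TensorProduct.assoc k N D D) (ρ.rTensor D (ρ n)) =
      (CoalgebraStruct.comul (R := k) (A := D)).lTensor N (ρ n)
  counit : ∀ n : N, (TensorProduct.rid k N)
      ((CoalgebraStruct.counit (R := k) (A := D)).lTensor N (ρ n)) = n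

/-- Morphisms of right `D`-comodules. -/
def IsRightComodHom {N N' : Type} [AddCommGroup N] [Module k N]
    [AddCommGroup N'] [Module k N']
    (ρN : N →ₗ[k] N ⊗[k] D) (ρN' : N' →ₗ[k] N' ⊗[k] D) (f : N →ₗ[k] N') : Prop :=
  f.rTensor D ∘ₗ ρN = ρN' ∘ₗ f

/-- The coaction of the cofree right comodule `V ⊗ D`. -/
noncomputable def cofreeRightCoaction (V : Type) [AddCommGroup V] [Module k V] :
    V ⊗[k] D →ₗ[k] (V ⊗[k] D) ⊗[k] D :=
  (TensorProduct.assoc k V D D).symm.toLinearMap ∘ₗ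
    (CoalgebraStruct.comul (R := k) (A := D)).lTensor V

/-- A right comodule is finitely cogenerated if it admits an injective comodule
morphism into a cofree right comodule with finite-dimensional cogenerators. -/
def FinCogenRight {N : Type} [AddCommGroup N] [Module k N]
    (ρ : N →ₗ[k] N ⊗[k] D) : Prop :=
  ∃ (V : Type) (_ : AddCommGroup V) (_ : Module k V), FiniteDimensional k V ∧
    ∃ f : N →ₗ[k] V ⊗[k] D, Function.Injective f ∧
      IsRightComodHom k D ρ (cofreeRightCoaction k D V) f

/-- A right comodule is finitely copresented if it is (isomorphic to) the kernel of a
morphism of finitely cogenerated cofree right comodules. -/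
def FinCopresRight {N : Type} [AddCommGroup N] [Module k N]
    (ρ : N →ₗ[k] N ⊗[k] D) : Prop :=
  ∃ (V : Type) (_ : AddCommGroup V) (_ : Module k V)
    (W : Type) (_ : AddCommGroup W) (_ : Module k W),
    FiniteDimensional k V ∧ FiniteDimensional k W ∧
    ∃ g : V ⊗[k] D →ₗ[k] W ⊗[k] D,
      IsRightComodHom k D (cofreeRightCoaction k D V) (cofreeRightCoaction k D W) g ∧
      ∃ e : N →ₗ[k] V ⊗[k] D, Function.Injective e ∧
        IsRightComodHom k D ρ (cofreeRightCoaction k D V) e ∧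
        LinearMap.range e = LinearMap.ker g

/-- The canonical left `D`-contraaction on the dual vector space `N* = Hom_k(N, k)`
of a right `D`-comodule `N`. -/
noncomputable def dualContraaction {N : Type} [AddCommGroup N] [Module k N]
    (ρ : N →ₗ[k] N ⊗[k] D) :
    (D →ₗ[k] (N →ₗ[k] k)) →ₗ[k] (N →ₗ[k] k) :=
  (LinearMap.lcomp k k ρ) ∘ₗ (TensorProduct.uncurry (RingHom.id k) N D k) ∘ₗ
    (LinearMap.lflip (R₀ := k)).toLinearMap

/-- The dualization map on morphisms, `φ ↦ φ* = Hom_k(φ, k)`. -/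
noncomputable def dualizationMap {N N' : Type} [AddCommGroup N] [Module k N]
    [AddCommGroup N'] [Module k N'] (φ : N →ₗ[k] N') :
    (N' →ₗ[k] k) →ₗ[k] (N →ₗ[k] k) :=
  LinearMap.lcomp k k φ

end RightComod

open TensorProduct LinearMap

section DAct

variable (k : Type) [Field k]
variable (D : Type) [AddCommGroup D] [Module k D] [Coalgebra k D]

/-- The underlying left `D* = Hom_k(D,k)`-module structure of a left `D`-contramodule:
the action of a linear functional `f : D → k` on `p` is `π(d ↦ f(d)·p)`. -/
noncomputable def dAction {P : Type} [AddCommGroup P] [Module k P]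
    (π : (D →ₗ[k] P) →ₗ[k] P) (f : D →ₗ[k] k) (p : P) : P :=
  π (f.smulRight p)

end DAct

section RSub
variable (k : Type) [Field k]
variable (D : Type) [AddCommGroup D] [Module k D] [Coalgebra k D]
variable {N : Type} [AddCommGroup N] [Module k N]

/-- A subspace of a right comodule is a subcomodule if the coaction takes it into the
image of `N' ⊗ D`. -/
def IsSubcomodRight (ρ : N →ₗ[k] N ⊗[k] D) (N' : Submodule k N) : Prop :=
  ∀ n ∈ N', ρ n ∈ LinearMap.range (N'.subtype.rTensor D)

/-- The quotient right comodule `N/N'` is finitely cogenerated. -/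
def QuotFinCogenRight (ρ : N →ₗ[k] N ⊗[k] D) (N' : Submodule k N) : Prop :=
  ∃ (V : Type) (_ : AddCommGroup V) (_ : Module k V), FiniteDimensional k V ∧
    ∃ g : N →ₗ[k] V ⊗[k] D, IsRightComodHom k D ρ (cofreeRightCoaction k D V) g ∧
      LinearMap.ker g = N'

/-- A right comodule is co-Noetherian if all its quotient comodules are finitely
cogenerated. -/
def CoNoetherianRight (ρ : N →ₗ[k] N ⊗[k] D) : Prop :=
  ∀ N' : Submodule k N, IsSubcomodRight k D ρ N' → QuotFinCogenRight k D ρ N'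

/-- A right comodule is Artinian if every descending chain of subcomodules
terminates. -/
def ArtinianRight (ρ : N →ₗ[k] N ⊗[k] D) : Prop :=
  ∀ f : ℕ → Submodule k N, (∀ n, IsSubcomodRight k D ρ (f n)) →
    (∀ n, f (n + 1) ≤ f n) → ∃ n, ∀ m, n ≤ m → f m = f n

end RSub

section DModNoeth
variable (k : Type) [Field k]
variable (D : Type) [AddCommGroup D] [Module k D] [Coalgebra k D]
variable {P : Type} [AddCommGroup P] [Module k P]

/-- A subspace of (the underlying `D*`-module of) a contramodule is a `D*`-submodule
if it is closed under the `D*`-action. -/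
def IsDStarSubmodule (π : (D →ₗ[k] P) →ₗ[k] P) (Q : Submodule k P) : Prop :=
  ∀ f : D →ₗ[k] k, ∀ p ∈ Q, dAction k D π f p ∈ Q

/-- A `D*`-submodule `Q` is finitely generated over `D*` if it is the smallest
`D*`-submodule containing some finite set. -/
def FGDStarSubmodule (π : (D →ₗ[k] P) →ₗ[k] P) (Q : Submodule k P) : Prop :=
  ∃ s : Finset P, (↑s : Set P) ⊆ Q ∧
    ∀ Q' : Submodule k P, IsDStarSubmodule k D π Q' → (↑s : Set P) ⊆ Q' → Q ≤ Q'

/-- The underlying `D*`-module (of a contramodule with contraaction `π`) is Noetherian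
if all its `D*`-submodules are finitely generated. -/
def NoetherianDStarModule (π : (D →ₗ[k] P) →ₗ[k] P) : Prop :=
  ∀ Q : Submodule k P, IsDStarSubmodule k D π Q → FGDStarSubmodule k D π Q

end DModNoeth

/-!
Write `f · p = π (f.smulRight p)` for the `D*`-action on a contramodule `P`. Subcontramodules are
`D*`-submodules, and conversely every cyclic `D*`-submodule `D* · p` is a subcontramodule: it is the
image of the contramodule morphism `Hom(D, k) → P`, `f ↦ f · p` (contraassociativity), and images
of contramodule morphisms are subcontramodules because vector spaces are projective. So finitely
generated `D*`-submodules are subcontramodules, and the ascending chain condition on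
subcontramodules is the same as Noetherianity of the `D*`-module, which is (a).

For the dual `L*` of a comodule, `f · q = f ∘ c_q` with `c_q : L → D`, `x ↦ (q ⊗ id) (ρ x)`, so
`D* · q = (ker c_q)^⊥`. Hence the `D*`-submodule generated by a finite set `s` is the annihilator of
`⋂_{q ∈ s} ker c_q`, the kernel of the comodule morphism `(q)_{q ∈ s} ⊗ id ∘ ρ : L → k^s ⊗ D`
into a cofree comodule. Annihilator duality turns chains of subcomodules into chains of
`D*`-submodules and back, giving (b). For (c), a subcomodule `N` is the double annihilator of
`N^⊥`, a subcontramodule; if `N^⊥` is generated as a contramodule by `q₁, …, qₙ`, it is generated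
by them as a `D*`-module, so `N = ⋂ ker c_{qᵢ}` is the kernel of a morphism `L → kⁿ ⊗ D`.
-/

section DStarSpan

variable {k D P : Type} [Field k] [AddCommGroup D] [Module k D] [AddCommGroup P] [Module k P]
  (π : (D →ₗ[k] P) →ₗ[k] P)

noncomputable def dActionMap (p : P) : (D →ₗ[k] k) →ₗ[k] P :=
  π ∘ₗ LinearMap.smulRightₗ.flip p

@[simp] lemma dActionMap_apply (p : P) (f : D →ₗ[k] k) :
    dActionMap π p f = dAction k D π f p := rfl

noncomputable def dStarSpan (s : Finset P) : Submodule k P :=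
  s.sup fun p => range (dActionMap π p)

variable {π}

lemma dAction_mem_dStarSpan {s : Finset P} {p : P} (hp : p ∈ s) (f : D →ₗ[k] k) :
    dAction k D π f p ∈ dStarSpan π s :=
  Finset.le_sup (f := fun p => range (dActionMap π p)) hp ⟨f, rfl⟩

lemma dStarSpan_le {s : Finset P} {Q : Submodule k P} (hQ : IsDStarSubmodule k D π Q)
    (hs : (s : Set P) ⊆ Q) : dStarSpan π s ≤ Q :=
  Finset.sup_le fun p hp => by
    rintro _ ⟨f, rfl⟩
    exact hQ f p (hs hp)

lemma dStarSpan_mono {s t : Finset P} (h : s ⊆ t) : dStarSpan π s ≤ dStarSpan π t :=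
  Finset.sup_mono h

lemma subset_dStarSpan [Coalgebra k D]
    (hunit : ∀ p, dAction k D π (CoalgebraStruct.counit (R := k) (A := D)) p = p)
    (s : Finset P) : (s : Set P) ⊆ dStarSpan π s := fun p hp =>
  hunit p ▸ dAction_mem_dStarSpan hp _

lemma NoetherianDStarModule.chain_stabilizes (hN : NoetherianDStarModule k D π)
    (f : ℕ → Submodule k P) (hf : ∀ n, IsDStarSubmodule k D π (f n))
    (hmono : ∀ n, f n ≤ f (n + 1)) : ∃ n, ∀ m, n ≤ m → f m = f n := by
  have hmono : Monotone f := monotone_nat_of_le_succ hmono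
  have mem_iSup : ∀ x, x ∈ ⨆ n, f n ↔ ∃ n, x ∈ f n :=
    fun x => Submodule.mem_iSup_of_directed f hmono.directed_le
  have hsup : IsDStarSubmodule k D π (⨆ n, f n) := fun g p hp => by
    obtain ⟨n, hn⟩ := (mem_iSup p).1 hp
    exact (mem_iSup _).2 ⟨n, hf n g p hn⟩
  obtain ⟨s, hs, hmin⟩ := hN _ hsup
  choose! idx hidx using fun p (hp : p ∈ s) => (mem_iSup p).1 (hs hp)
  refine ⟨s.sup idx, fun m hm => le_antisymm ?_ (hmono hm)⟩
  refine (le_iSup f m).trans (hmin _ (hf _) fun p hp => ?_)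
  exact hmono (Finset.le_sup hp) (hidx p hp)

lemma noetherianDStarModule_of_dStarSpan_chain [Coalgebra k D]
    (hunit : ∀ p, dAction k D π (CoalgebraStruct.counit (R := k) (A := D)) p = p)
    (h : ∀ s : ℕ → Finset P, (∀ n, s n ⊆ s (n + 1)) →
      ∃ n, dStarSpan π (s (n + 1)) ≤ dStarSpan π (s n)) :
    NoetherianDStarModule k D π := by
  classical
  intro Q hQ
  by_contra hfg
  have hnew : ∀ t : Finset P, ∃ p, (t : Set P) ⊆ Q → p ∈ Q ∧ p ∉ dStarSpan π t := by
    intro t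
    by_cases ht : (t : Set P) ⊆ Q
    · by_contra! hall
      exact hfg ⟨t, ht, fun Q' hQ' htQ' p hp =>
        dStarSpan_le hQ' htQ' ((hall p).2 hp)⟩
    · exact ⟨0, fun h => absurd h ht⟩
  choose next hnext using hnew
  let s : ℕ → Finset P := fun n =>
    Nat.rec (motive := fun _ => Finset P) ∅ (fun _ t => insert (next t) t) n
  have hsQ : ∀ n, (s n : Set P) ⊆ Q := by
    intro n
    induction n with
    | zero => simp [s]
    | succ n ih =>
      simpa [s, Set.insert_subset_iff] using ⟨(hnext _ ih).1, ih⟩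
  obtain ⟨n, hn⟩ := h s fun n => Finset.subset_insert _ _
  exact (hnext _ (hsQ n)).2 (hn (subset_dStarSpan hunit _ (Finset.mem_insert_self _ _)))

end DStarSpan

section Contramodule

variable {k D P : Type} [Field k] [AddCommGroup D] [Module k D] [AddCommGroup P] [Module k P]
  {π : (D →ₗ[k] P) →ₗ[k] P}

lemma IsSubcontra.isDStarSubmodule {Q : Submodule k P} (hQ : IsSubcontra k D π Q) :
    IsDStarSubmodule k D π Q := fun f p hp =>
  hQ _ <| by
    rintro _ ⟨d, rfl⟩
    exact Q.smul_mem _ hp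

lemma LinearMap.exists_comp_eq_of_range_le {A B C : Type} [AddCommGroup A] [Module k A]
    [AddCommGroup B] [Module k B] [AddCommGroup C] [Module k C] (φ : A →ₗ[k] C)
    (g : B →ₗ[k] C) (h : range g ≤ range φ) : ∃ g' : B →ₗ[k] A, φ ∘ₗ g' = g := by
  obtain ⟨σ, hσ⟩ := φ.rangeRestrict.exists_rightInverse_of_surjective φ.range_rangeRestrict
  refine ⟨σ ∘ₗ g.codRestrict (range φ) fun b => h ⟨b, rfl⟩, ?_⟩
  ext b
  exact congrArg Subtype.val (LinearMap.congr_fun hσ _)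

lemma IsContraHom.isSubcontra_range {F : Type} [AddCommGroup F] [Module k F]
    {πF : (D →ₗ[k] F) →ₗ[k] F} {φ : F →ₗ[k] P} (hφ : IsContraHom k D πF π φ) :
    IsSubcontra k D π (range φ) := fun g hg => by
  obtain ⟨g', rfl⟩ := φ.exists_comp_eq_of_range_le g hg
  exact hφ g' ▸ mem_range_self φ _

lemma isSubcontra_bot : IsSubcontra k D π ⊥ := fun g hg => by
  rw [show g = 0 from LinearMap.ext fun d => (Submodule.mem_bot k).1 (hg ⟨d, rfl⟩), map_zero]
  exact zero_mem _

lemma IsSubcontra.sup {Q₁ Q₂ : Submodule k P} (h₁ : IsSubcontra k D π Q₁)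
    (h₂ : IsSubcontra k D π Q₂) : IsSubcontra k D π (Q₁ ⊔ Q₂) := fun g hg => by
  obtain ⟨g', rfl⟩ := (Q₁.subtype.coprod Q₂.subtype).exists_comp_eq_of_range_le g
    (by rwa [LinearMap.range_coprod, Submodule.range_subtype, Submodule.range_subtype])
  have hsplit : Q₁.subtype.coprod Q₂.subtype ∘ₗ g' =
      Q₁.subtype ∘ₗ (LinearMap.fst k Q₁ Q₂ ∘ₗ g') +
        Q₂.subtype ∘ₗ (LinearMap.snd k Q₁ Q₂ ∘ₗ g') := by
    ext d; simp
  rw [hsplit, map_add]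
  exact Submodule.add_mem_sup
    (h₁ _ ((range_comp_le_range _ _).trans (Submodule.range_subtype Q₁).le))
    (h₂ _ ((range_comp_le_range _ _).trans (Submodule.range_subtype Q₂).le))

variable [Coalgebra k D]

lemma IsContra.isContraHom_dActionMap (hπ : IsContra k D π) (p : P) :
    IsContraHom k D (freeContraaction k D k) π (dActionMap π p) := fun g => by
  set G := TensorProduct.uncurry (RingHom.id k) D D k g
  have hcurry : π ∘ₗ TensorProduct.curry (G.smulRight p) = dActionMap π p ∘ₗ g := by
    ext d
    refine congrArg π (LinearMap.ext fun e => ?_)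
    simp [G]
  calc π ((G ∘ₗ CoalgebraStruct.comul (R := k) (A := D)).smulRight p)
      = π (G.smulRight p ∘ₗ CoalgebraStruct.comul (R := k) (A := D)) := rfl
    _ = π (dActionMap π p ∘ₗ g) := by rw [hπ.contraassoc, hcurry]

lemma IsContra.isSubcontra_dStarSpan (hπ : IsContra k D π) (s : Finset P) :
    IsSubcontra k D π (dStarSpan π s) :=
  Finset.sup_induction isSubcontra_bot (fun _ h₁ _ h₂ => h₁.sup h₂)
    fun p _ => (hπ.isContraHom_dActionMap p).isSubcontra_range

theorem IsContra.coArtinianContra_iff_noetherianDStarModule (hπ : IsContra k D π) :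
    CoArtinianContra k D π ↔ NoetherianDStarModule k D π := by
  refine ⟨fun hA => noetherianDStarModule_of_dStarSpan_chain hπ.contraunit fun s hs => ?_,
    fun hN f hf hmono => hN.chain_stabilizes f (fun n => (hf n).isDStarSubmodule) hmono⟩
  obtain ⟨n, hn⟩ := hA (fun n => dStarSpan π (s n)) (fun n => hπ.isSubcontra_dStarSpan _)
    fun n => dStarSpan_mono (hs n)
  exact ⟨n, (hn (n + 1) n.le_succ).le⟩

end Contramodule

section DualComodule

variable {k D L : Type} [Field k] [AddCommGroup D] [Module k D] [AddCommGroup L] [Module k L]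
  {ρ : L →ₗ[k] L ⊗[k] D}

variable (ρ) in
noncomputable def coeffMap (q : Module.Dual k L) : L →ₗ[k] D :=
  (TensorProduct.lid k D).toLinearMap ∘ₗ q.rTensor D ∘ₗ ρ

lemma dAction_dualContraaction (f : Module.Dual k D) (q : Module.Dual k L) :
    dAction k D (dualContraaction k D ρ) f q = f ∘ₗ coeffMap ρ q := by
  have h : TensorProduct.uncurry (RingHom.id k) L D k (f.smulRight q).flip =
      f ∘ₗ (TensorProduct.lid k D).toLinearMap ∘ₗ q.rTensor D :=
    TensorProduct.ext' fun x d => by simp [mul_comm]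
  exact LinearMap.ext fun x => LinearMap.congr_fun h (ρ x)

lemma range_dActionMap_dualContraaction (q : Module.Dual k L) :
    range (dActionMap (dualContraaction k D ρ) q) = (ker (coeffMap ρ q)).dualAnnihilator := by
  rw [← LinearMap.range_dualMap_eq_dualAnnihilator_ker]
  congr 1
  ext f : 1
  exact dAction_dualContraaction f q

lemma dStarSpan_dualContraaction (s : Finset (Module.Dual k L)) :
    dStarSpan (dualContraaction k D ρ) s = (⨅ q : s, ker (coeffMap ρ q)).dualAnnihilator := by
  rw [Subspace.dualAnnihilator_iInf_eq, dStarSpan, Finset.sup_eq_iSup, iSup_subtype']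
  simp_rw [range_dActionMap_dualContraaction]

lemma IsRightComod.dAction_dualContraaction_counit [Coalgebra k D] (hρ : IsRightComod k D ρ)
    (q : Module.Dual k L) :
    dAction k D (dualContraaction k D ρ) (CoalgebraStruct.counit (R := k) (A := D)) q = q := by
  have h : CoalgebraStruct.counit (R := k) (A := D) ∘ₗ (TensorProduct.lid k D).toLinearMap ∘ₗ
      q.rTensor D = q ∘ₗ (TensorProduct.rid k L).toLinearMap ∘ₗ
        (CoalgebraStruct.counit (R := k) (A := D)).lTensor L :=
    TensorProduct.ext' fun x d => by simp [mul_comm]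
  ext x
  rw [dAction_dualContraaction]
  simpa [coeffMap, hρ.counit x] using LinearMap.congr_fun h (ρ x)

lemma isSubcontra_dualAnnihilator {N : Submodule k L} (hN : IsSubcomodRight k D ρ N) :
    IsSubcontra k D (dualContraaction k D ρ) N.dualAnnihilator := fun g hg => by
  have hvanish : TensorProduct.uncurry (RingHom.id k) L D k g.flip ∘ₗ N.subtype.rTensor D = 0 :=
    TensorProduct.ext' fun x d => (Submodule.mem_dualAnnihilator _).1 (hg ⟨d, rfl⟩) x x.2
  refine (Submodule.mem_dualAnnihilator _).2 fun x hx => ?_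
  obtain ⟨u, hu⟩ := hN x hx
  show TensorProduct.uncurry (RingHom.id k) L D k g.flip (ρ x) = 0
  rw [← hu]
  exact LinearMap.congr_fun hvanish u

lemma IsRightComodHom.isSubcomodRight_ker {N : Type} [AddCommGroup N] [Module k N]
    {ρN : N →ₗ[k] N ⊗[k] D} {φ : L →ₗ[k] N} (hφ : IsRightComodHom k D ρ ρN φ) :
    IsSubcomodRight k D ρ (ker φ) := fun x hx =>
  (Module.Flat.rTensor_exact D φ.exact_subtype_ker_map (ρ x)).1 <| by
    rw [← LinearMap.comp_apply, hφ, LinearMap.comp_apply, mem_ker.1 hx, map_zero]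

lemma IsRightComod.isRightComodHom_rTensor_comp [Coalgebra k D] (hρ : IsRightComod k D ρ)
    {V : Type} [AddCommGroup V] [Module k V] (ℓ : L →ₗ[k] V) :
    IsRightComodHom k D ρ (cofreeRightCoaction k D V) (ℓ.rTensor D ∘ₗ ρ) := by
  have hassoc : (TensorProduct.assoc k V D D).toLinearMap ∘ₗ (ℓ.rTensor D).rTensor D =
      ℓ.rTensor (D ⊗[k] D) ∘ₗ (TensorProduct.assoc k L D D).toLinearMap :=
    TensorProduct.ext_threefold fun _ _ _ => rfl
  have hcomm : ℓ.rTensor (D ⊗[k] D) ∘ₗ (CoalgebraStruct.comul (R := k) (A := D)).lTensor L =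
      (CoalgebraStruct.comul (R := k) (A := D)).lTensor V ∘ₗ ℓ.rTensor D := by
    rw [rTensor_comp_lTensor, lTensor_comp_rTensor]
  ext x
  simp only [comp_apply, cofreeRightCoaction, LinearEquiv.coe_coe, rTensor_comp]
  rw [LinearEquiv.eq_symm_apply]
  have h := LinearMap.congr_fun hassoc ((ρ.rTensor D) (ρ x))
  simp only [comp_apply, LinearEquiv.coe_coe] at h
  rw [h, hρ.coassoc]
  exact LinearMap.congr_fun hcomm (ρ x)

lemma ker_rTensor_pi_comp {ι : Type} [Finite ι] (q : ι → Module.Dual k L) :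
    ker ((LinearMap.pi q).rTensor D ∘ₗ ρ) = ⨅ i, ker (coeffMap ρ (q i)) := by
  classical
  have := Fintype.ofFinite ι
  let e := (TensorProduct.comm k (ι → k) D).trans (TensorProduct.piScalarRight k k D ι)
  have he : ∀ i, LinearMap.proj i ∘ₗ e.toLinearMap ∘ₗ (LinearMap.pi q).rTensor D =
      (TensorProduct.lid k D).toLinearMap ∘ₗ (q i).rTensor D :=
    fun i => TensorProduct.ext' fun x d => by simp [e]
  ext x
  simp only [mem_ker, Submodule.mem_iInf, comp_apply, ← e.map_eq_zero_iff, funext_iff]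
  exact forall_congr' fun i => by
    simpa [coeffMap] using congrArg (· = 0) (LinearMap.congr_fun (he i) (ρ x))

end DualComodule

section ArtinianComodule

variable {k D L : Type} [Field k] [AddCommGroup D] [Module k D] [Coalgebra k D]
  [AddCommGroup L] [Module k L] {ρ : L →ₗ[k] L ⊗[k] D}

lemma IsRightComod.isSubcomodRight_iInf_ker_coeffMap (hρ : IsRightComod k D ρ)
    (s : Finset (Module.Dual k L)) : IsSubcomodRight k D ρ (⨅ q : s, ker (coeffMap ρ q)) := by
  rw [← ker_rTensor_pi_comp]
  exact (hρ.isRightComodHom_rTensor_comp _).isSubcomodRight_ker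

theorem IsRightComod.artinianRight_iff_noetherianDStarModule (hρ : IsRightComod k D ρ) :
    ArtinianRight k D ρ ↔ NoetherianDStarModule k D (dualContraaction k D ρ) := by
  constructor
  · intro hA
    refine noetherianDStarModule_of_dStarSpan_chain hρ.dAction_dualContraaction_counit
      fun s hs => ?_
    obtain ⟨n, hn⟩ := hA (fun n => ⨅ q : s n, ker (coeffMap ρ q))
      (fun n => hρ.isSubcomodRight_iInf_ker_coeffMap _)
      fun n => le_iInf fun q => iInf_le_of_le ⟨q, hs n q.2⟩ le_rfl
    refine ⟨n, ?_⟩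
    rw [dStarSpan_dualContraaction, dStarSpan_dualContraaction, hn (n + 1) n.le_succ]
  · intro hN f hf hanti
    obtain ⟨n, hn⟩ := hN.chain_stabilizes (fun n => (f n).dualAnnihilator)
      (fun n => (isSubcontra_dualAnnihilator (hf n)).isDStarSubmodule)
      fun n => Submodule.dualAnnihilator_anti (hanti n)
    exact ⟨n, fun m hm => Subspace.dualAnnihilator_inj.1 (hn m hm)⟩

end ArtinianComodule

section FinitelyGeneratedContramodule

variable {k D P : Type} [Field k] [AddCommGroup D] [Module k D] [AddCommGroup P] [Module k P]
  {π : (D →ₗ[k] P) →ₗ[k] P}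

lemma IsContraHom.map_dAction {F : Type} [AddCommGroup F] [Module k F]
    {πF : (D →ₗ[k] F) →ₗ[k] F} {G : F →ₗ[k] P} (hG : IsContraHom k D πF π G)
    (f : Module.Dual k D) (x : F) : G (dAction k D πF f x) = dAction k D π f (G x) :=
  (hG _).trans <| congrArg π <| LinearMap.ext fun d => by simp

lemma CompatibleSubContraaction.map_dStarSpan {Q : Submodule k P}
    {π' : (D →ₗ[k] Q) →ₗ[k] Q} (h : CompatibleSubContraaction k D π Q π') (s : Finset Q) :
    (dStarSpan π' s).map Q.subtype = dStarSpan π (s.map (Function.Embedding.subtype (· ∈ Q))) := by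
  rw [dStarSpan, Finset.apply_sup_eq_sup_comp _ (fun _ _ => Submodule.map_sup _ _ _)
    (Submodule.map_bot _), dStarSpan, Finset.sup_map]
  refine Finset.sup_congr rfl fun p _ => ?_
  rw [Function.comp_apply, ← LinearMap.range_comp]
  congr 1
  ext f : 1
  exact h _

variable [Coalgebra k D]

lemma dAction_freeContraaction_counit_smulRight {V : Type} [AddCommGroup V] [Module k V]
    (f : Module.Dual k D) (v : V) :
    dAction k D (freeContraaction k D V) f
      ((CoalgebraStruct.counit (R := k) (A := D)).smulRight v) = f.smulRight v := by
  have h : TensorProduct.uncurry (RingHom.id k) D D V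
      (f.smulRight ((CoalgebraStruct.counit (R := k) (A := D)).smulRight v)) =
      f.smulRight v ∘ₗ (TensorProduct.rid k D).toLinearMap ∘ₗ
        (CoalgebraStruct.counit (R := k) (A := D)).lTensor D :=
    TensorProduct.ext' fun d e => by simp [smul_smul, mul_comm]
  ext d
  show TensorProduct.uncurry (RingHom.id k) D D V _ (CoalgebraStruct.comul (R := k) d) = _
  simp [h, Coalgebra.lTensor_counit_comul]

lemma FinGenContra.exists_dStarSpan_eq_top (h : FinGenContra k D π) :
    ∃ s : Finset P, dStarSpan π s = ⊤ := by
  classical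
  obtain ⟨V, _, _, _, G, hGsurj, hG⟩ := h
  let b := Module.finBasis k V
  refine ⟨Finset.univ.image fun i => G ((CoalgebraStruct.counit (R := k) (A := D)).smulRight (b i)),
    eq_top_iff.2 fun p _ => ?_⟩
  obtain ⟨g, rfl⟩ := hGsurj p
  have hg : g = ∑ i, dAction k D (freeContraaction k D V) (b.coord i ∘ₗ g)
      ((CoalgebraStruct.counit (R := k) (A := D)).smulRight (b i)) := by
    ext d
    simp [dAction_freeContraaction_counit_smulRight, b.sum_repr]
  rw [hg, map_sum]
  exact Submodule.sum_mem _ fun i _ => hG.map_dAction _ _ ▸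
    dAction_mem_dStarSpan (Finset.mem_image_of_mem _ (Finset.mem_univ i)) _

end FinitelyGeneratedContramodule

theorem IsRightComod.coNoetherianRight_of_noetherianContra {k D L : Type} [Field k]
    [AddCommGroup D] [Module k D] [Coalgebra k D] [AddCommGroup L] [Module k L]
    {ρ : L →ₗ[k] L ⊗[k] D} (hρ : IsRightComod k D ρ)
    (hN : NoetherianContra k D (dualContraaction k D ρ)) : CoNoetherianRight k D ρ := by
  intro N hN'
  obtain ⟨π', hcompat, hfg⟩ := hN _ (isSubcontra_dualAnnihilator hN')
  obtain ⟨t, ht⟩ := hfg.exists_dStarSpan_eq_top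
  set s := t.map (Function.Embedding.subtype (· ∈ N.dualAnnihilator))
  have hker : ⨅ q : s, ker (coeffMap ρ q) = N := by
    rw [← Subspace.dualAnnihilator_inj, ← dStarSpan_dualContraaction, ← hcompat.map_dStarSpan, ht,
      Submodule.map_subtype_top]
  exact ⟨s → k, inferInstance, inferInstance, inferInstance, _,
    hρ.isRightComodHom_rTensor_comp (LinearMap.pi fun q : s => (q : Module.Dual k L)),
    (ker_rTensor_pi_comp _).trans hker⟩

/-- Lemma 1.10: (a) a left `D`-contramodule is co-Artinian if and only if its
underlying left `D*`-module is Noetherian; (b) a right `D`-comodule `L` is Artinian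
if and only if the dual vector space `L*` is a Noetherian left `D*`-module;
(c) a right `D`-comodule `L` is co-Noetherian provided that its dual vector space
`L*` is a Noetherian left `D`-contramodule. -/
theorem coArtinian_iff_dual_noetherian
    (k : Type) [Field k]
    (D : Type) [AddCommGroup D] [Module k D] [Coalgebra k D] :
    (∀ (P : Type) (_ : AddCommGroup P) (_ : Module k P)
      (π : (D →ₗ[k] P) →ₗ[k] P), IsContra k D π →
        (CoArtinianContra k D π ↔ NoetherianDStarModule k D π)) ∧
    (∀ (L : Type) (_ : AddCommGroup L) (_ : Module k L)
      (ρ : L →ₗ[k] L ⊗[k] D), IsRightComod k D ρ →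
        (ArtinianRight k D ρ ↔ NoetherianDStarModule k D (dualContraaction k D ρ))) ∧
    (∀ (L : Type) (_ : AddCommGroup L) (_ : Module k L)
      (ρ : L →ₗ[k] L ⊗[k] D), IsRightComod k D ρ →
        NoetherianContra k D (dualContraaction k D ρ) → CoNoetherianRight k D ρ) :=
  ⟨fun _ _ _ _ hπ => hπ.coArtinianContra_iff_noetherianDStarModule,
    fun _ _ _ _ hρ => hρ.artinianRight_iff_noetherianDStarModule,
    fun _ _ _ _ hρ => hρ.coNoetherianRight_of_noetherianContra⟩
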